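/- arXiv:2404.00677 — 6 statements merged into one kernel-verified Lean document; each statement's English description precedes it below -/
import Mathlib

section
/- For every nonzero traceless symmetric real 3×3 matrix Q with eigenvalues λ₁ ≥ λ₂ ≥ λ₃, there exist a real number s > 0, a real number r ∈ [0,1], and orthonormal unit vectors n, m ∈ ℝ³ (n·m = 0) such that Q = s(n⊗n − (1/3)I) + s·r(m⊗m − (1/3)I), where one may take s = 2λ₁ + λ₂ and r = (λ₁ + 2λ₂)/(2λ₁ + λ₂). -/
open Matrix

lemma complete_rel (n m p : Fin 3 → ℝ)
    (hn : n ⬝ᵥ n = 1) (hm : m ⬝ᵥ m = 1) (hp : p ⬝ᵥ p = 1)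
    (hnm : n ⬝ᵥ m = 0) (hnp : n ⬝ᵥ p = 0) (hmp : m ⬝ᵥ p = 0) :
    vecMulVec n n + vecMulVec m m + vecMulVec p p = 1 := by
  simp only [dotProduct, Fin.sum_univ_three] at hn hm hp hnm hnp hmp
  have h1 : (Matrix.of ![n, m, p]) * (Matrix.of fun i j => ![n, m, p] j i) = 1 := by
    ext i j
    fin_cases i <;> fin_cases j <;>
      simp [Matrix.mul_apply, Matrix.one_apply, Fin.sum_univ_three] <;>
      linarith
  have h2 := mul_eq_one_comm.mp h1
  ext i j
  have := congrFun (congrFun h2 i) j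
  simp only [Matrix.mul_apply, Fin.sum_univ_three, Matrix.of_apply,
    Matrix.cons_val_zero, Matrix.cons_val_one, Matrix.head_cons,
    Matrix.cons_val_two, Matrix.tail_cons] at this
  simp only [Matrix.add_apply, vecMulVec_apply, Pi.mul_apply]
  rw [this]

/-- Every nonzero traceless symmetric real 3×3 matrix `Q`, with spectral
decomposition `Q = λ₁ n⊗n + λ₂ m⊗m + λ₃ p⊗p` for ordered eigenvalues `λ₁ ≥ λ₂ ≥ λ₃` and an
orthonormal eigenbasis `n, m, p`, can be written as
`Q = s (n⊗n − I/3) + s r (m⊗m − I/3)` with `s = 2λ₁ + λ₂ > 0` and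
`r = (λ₁ + 2λ₂)/(2λ₁ + λ₂) ∈ [0,1]`, where `n ⬝ m = 0` and `n, m` are unit vectors. -/
theorem stmt_0 (Q : Matrix (Fin 3) (Fin 3) ℝ) (hsym : Qᵀ = Q) (htr : Q.trace = 0)
    (hQ0 : Q ≠ 0) (l1 l2 l3 : ℝ) (n m p : Fin 3 → ℝ)
    (hn : n ⬝ᵥ n = 1) (hm : m ⬝ᵥ m = 1) (hp : p ⬝ᵥ p = 1)
    (hnm : n ⬝ᵥ m = 0) (hnp : n ⬝ᵥ p = 0) (hmp : m ⬝ᵥ p = 0)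
    (h12 : l2 ≤ l1) (h23 : l3 ≤ l2)
    (hdecomp : Q = l1 • vecMulVec n n + l2 • vecMulVec m m + l3 • vecMulVec p p) :
    ∃ s r : ℝ, 0 < s ∧ r ∈ Set.Icc (0 : ℝ) 1 ∧
      s = 2 * l1 + l2 ∧ r = (l1 + 2 * l2) / (2 * l1 + l2) ∧
      Q = s • (vecMulVec n n - (1 / 3 : ℝ) • (1 : Matrix (Fin 3) (Fin 3) ℝ))
        + (s * r) • (vecMulVec m m - (1 / 3 : ℝ) • (1 : Matrix (Fin 3) (Fin 3) ℝ)) := by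
  have hcomp := complete_rel n m p hn hm hp hnm hnp hmp
  -- trace computation
  have htrn : (vecMulVec n n).trace = 1 := by
    simpa [Matrix.trace, Matrix.diag, vecMulVec_apply, dotProduct] using hn
  have htrm : (vecMulVec m m).trace = 1 := by
    simpa [Matrix.trace, Matrix.diag, vecMulVec_apply, dotProduct] using hm
  have htrp : (vecMulVec p p).trace = 1 := by
    simpa [Matrix.trace, Matrix.diag, vecMulVec_apply, dotProduct] using hp
  have hsum : l1 + l2 + l3 = 0 := by
    have := htr
    rw [hdecomp] at this
    simpa [Matrix.trace_add, Matrix.trace_smul, htrn, htrm, htrp] using this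
  have hl3 : l3 = -l1 - l2 := by linarith
  subst hl3
  have h1 : 0 ≤ l1 + 2 * l2 := by linarith
  have h2 : 0 ≤ l1 - l2 := by linarith
  have hs : 0 < 2 * l1 + l2 := by
    rcases lt_or_eq_of_le (by linarith : (0:ℝ) ≤ 2 * l1 + l2) with h | h
    · exact h
    · exfalso
      have hl1 : l1 = 0 := by nlinarith
      have hl2 : l2 = 0 := by nlinarith
      apply hQ0
      rw [hdecomp, hl1, hl2]
      simp
  refine ⟨2 * l1 + l2, (l1 + 2 * l2) / (2 * l1 + l2), hs,
    ⟨div_nonneg h1 hs.le, (div_le_one hs).mpr (by linarith)⟩, rfl, rfl, ?_⟩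
  have hsr : (2 * l1 + l2) * ((l1 + 2 * l2) / (2 * l1 + l2)) = l1 + 2 * l2 := by
    field_simp
  rw [hsr, hdecomp]
  have hpp : vecMulVec p p = 1 - vecMulVec n n - vecMulVec m m := by
    rw [← hcomp]; abel
  rw [hpp]
  module
end

section
/- For Q ∈ N, the tangent space T_Q N equals { P ∈ S₀ : tr(PQ) = 0 and tr(PQ²) = 0 }, and the normal space (T_Q N)^⊥ inside S₀ is spanned by Q/(√2 r*) and (√6/(2r*²))(Q² − (2r*²/3)I). -/
open Matrix

attribute [local instance] Matrix.frobeniusNormedAddCommGroup Matrix.frobeniusNormedSpace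

/-- The manifold `N = { r*(n⊗n − m⊗m) : n, m ∈ ℝ³ orthonormal }`. -/
def Nman (rs : ℝ) : Set (Matrix (Fin 3) (Fin 3) ℝ) :=
  {A | ∃ n m : Fin 3 → ℝ, n ⬝ᵥ n = 1 ∧ m ⬝ᵥ m = 1 ∧ n ⬝ᵥ m = 0 ∧
    A = rs • (vecMulVec n n - vecMulVec m m)}

/-!
`N` is the orbit of `Q₀ = r*·diag(1, -1, 0)` under the conjugations `Q ↦ U Q Uᵀ` by orthogonal
`U`, and every condition in the theorem is invariant under them, so the linear algebra only has
to be done at `Q₀`. The maps `Q ↦ Qᵀ - Q`, `tr Q`, `tr Q²`, `tr Q³` are constant on `N`, so their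
differentials at `Q` vanish on the tangent cone; this gives one inclusion. Conversely, every `P`
satisfying the four linear conditions is a commutator `A Q - Q A` with `A` skew, i.e. the velocity
of the curve `t ↦ e^{tA} Q (e^{tA})ᵀ` in `N`. At `Q₀` those `P` are the symmetric matrices with
zero diagonal, whose orthogonal complement among traceless symmetric matrices consists of the
traceless diagonal ones, spanned by `Q₀` and `Q₀² - (2r*²/3) I`.
-/

open Filter Set NormedSpace

section TangentCone

variable {𝕜 E F : Type*} [NontriviallyNormedField 𝕜] [NormedAddCommGroup E] [NormedSpace 𝕜 E]
  [NormedAddCommGroup F] [NormedSpace 𝕜 F]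

theorem HasFDerivWithinAt.apply_eq_zero_of_mem_tangentConeAt {f : E → F} {f' : E →L[𝕜] F}
    {s : Set E} {x v : E} (hf : HasFDerivWithinAt f f' s x) (hc : ∀ y ∈ s, f y = f x)
    (hv : v ∈ tangentConeAt 𝕜 s x) : f' v = 0 := by
  have himage : f '' s ⊆ {f x} := by rintro _ ⟨y, hy, rfl⟩; exact hc y hy
  have hnot : ¬AccPt (f x) (𝓟 {f x}) := by rw [accPt_principal_iff_nhdsWithin]; simp
  exact tangentConeAt_subset_zero hnot (tangentConeAt_mono himage (hf.mapsTo_tangent_cone hv))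

theorem mem_tangentConeAt_of_hasDerivAt {s : Set E} {γ : 𝕜 → E} {y : E} (hγ : ∀ t, γ t ∈ s)
    (hd : HasDerivAt γ y 0) : y ∈ tangentConeAt 𝕜 s (γ 0) := by
  have hrange : γ '' univ ⊆ s := by rintro _ ⟨t, -, rfl⟩; exact hγ t
  have := hd.hasFDerivAt.hasFDerivWithinAt.mapsTo_tangent_cone
    (by simp [tangentConeAt_univ] : (1 : 𝕜) ∈ tangentConeAt 𝕜 univ 0)
  simpa using tangentConeAt_mono hrange this

end TangentCone

namespace Matrix

variable {ι R : Type*} [Fintype ι] [CommRing R]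

theorem transpose_conj (U X : Matrix ι ι R) : (U * X * Uᵀ)ᵀ = U * Xᵀ * Uᵀ := by
  simp only [transpose_mul, transpose_transpose, Matrix.mul_assoc]

variable [DecidableEq ι] {U : Matrix ι ι R}

theorem conj_mul_conj (hU : Uᵀ * U = 1) (X Y : Matrix ι ι R) :
    U * X * Uᵀ * (U * Y * Uᵀ) = U * (X * Y) * Uᵀ := by
  simp only [Matrix.mul_assoc, ← Matrix.mul_assoc Uᵀ, hU, Matrix.one_mul]

theorem transpose_mul_conj_mul (hU : Uᵀ * U = 1) (X : Matrix ι ι R) :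
    Uᵀ * (U * X * Uᵀ) * U = X := by
  simp only [Matrix.mul_assoc, hU, Matrix.mul_one, ← Matrix.mul_assoc Uᵀ, Matrix.one_mul]

theorem exists_eq_conj (hU : Uᵀ * U = 1) (X : Matrix ι ι R) : ∃ Y, X = U * Y * Uᵀ := by
  refine ⟨Uᵀ * X * U, ?_⟩
  have hU' : U * Uᵀ = 1 := mul_eq_one_comm.mp hU
  simp only [Matrix.mul_assoc, hU', Matrix.mul_one, ← Matrix.mul_assoc U, Matrix.one_mul]

theorem conj_inj (hU : Uᵀ * U = 1) {X Y : Matrix ι ι R} :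
    U * X * Uᵀ = U * Y * Uᵀ ↔ X = Y :=
  ⟨fun h => by rw [← transpose_mul_conj_mul hU X, h, transpose_mul_conj_mul hU],
    congrArg (U * · * Uᵀ)⟩

theorem trace_conj_of_transpose_mul_eq_one (hU : Uᵀ * U = 1) (X : Matrix ι ι R) :
    (U * X * Uᵀ).trace = X.trace := by
  rw [trace_mul_cycle, hU, Matrix.one_mul]

theorem of_mul_transpose_eq_one_of_orthonormal {n m p : Fin 3 → ℝ} (hn : n ⬝ᵥ n = 1)
    (hm : m ⬝ᵥ m = 1) (hp : p ⬝ᵥ p = 1) (hnm : n ⬝ᵥ m = 0) (hnp : n ⬝ᵥ p = 0) (hmp : m ⬝ᵥ p = 0) :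
    of ![n, m, p] * (of ![n, m, p])ᵀ = 1 := by
  have hentry (i j : Fin 3) :
      (of ![n, m, p] * (of ![n, m, p])ᵀ) i j = ![n, m, p] i ⬝ᵥ ![n, m, p] j := rfl
  ext i j
  rw [hentry]
  fin_cases i <;> fin_cases j <;>
    simp [*, dotProduct_comm m n, dotProduct_comm p n, dotProduct_comm p m]

theorem transpose_exp_mul_exp {A : Matrix ι ι ℝ} (hA : Aᵀ = -A) : (exp A)ᵀ * exp A = 1 := by
  rw [← exp_transpose, hA, ← Matrix.exp_add_of_commute (-A) A (Commute.neg_left (Commute.refl A)),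
    neg_add_cancel, exp_zero]

end Matrix

namespace Nman

def tangentSpaceAt (Q : Matrix (Fin 3) (Fin 3) ℝ) : Set (Matrix (Fin 3) (Fin 3) ℝ) :=
  {P | Pᵀ = P ∧ P.trace = 0 ∧ (P * Q).trace = 0 ∧ (P * (Q * Q)).trace = 0}

def normalSpaceAt (Q : Matrix (Fin 3) (Fin 3) ℝ) : Set (Matrix (Fin 3) (Fin 3) ℝ) :=
  {P | Pᵀ = P ∧ P.trace = 0 ∧ ∀ X ∈ tangentSpaceAt Q, (Pᵀ * X).trace = 0}

theorem conj_mem_tangentSpaceAt_iff {U X Y : Matrix (Fin 3) (Fin 3) ℝ} (hU : Uᵀ * U = 1) :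
    U * X * Uᵀ ∈ tangentSpaceAt (U * Y * Uᵀ) ↔ X ∈ tangentSpaceAt Y := by
  simp only [tangentSpaceAt, mem_ofPred_eq, transpose_conj, conj_inj hU, conj_mul_conj hU,
    trace_conj_of_transpose_mul_eq_one hU]

theorem single_add_single_mem_tangentSpaceAt_diagonal (d : Fin 3 → ℝ) {i j : Fin 3}
    (hij : i ≠ j) : single i j 1 + single j i 1 ∈ tangentSpaceAt (diagonal d) := by
  refine ⟨by simp [transpose_single, add_comm], by simp [hij, hij.symm], ?_, ?_⟩ <;>
    simp [add_mul, trace_single_mul, hij, hij.symm]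

def basePoint (rs : ℝ) : Matrix (Fin 3) (Fin 3) ℝ := diagonal ![rs, -rs, 0]

theorem mul_basePoint_mul_transpose (rs : ℝ) (U : Matrix (Fin 3) (Fin 3) ℝ) :
    U * basePoint rs * Uᵀ = rs • (vecMulVec (Uᵀ 0) (Uᵀ 0) - vecMulVec (Uᵀ 1) (Uᵀ 1)) := by
  ext i j
  simp only [basePoint, mul_apply, Fin.sum_univ_three, Fin.isValue, transpose_apply,
    diagonal_apply_eq, cons_val_zero, ne_eq, one_ne_zero, not_false_eq_true, diagonal_apply_ne,
    mul_zero, add_zero, Fin.reduceEq, zero_ne_one, cons_val_one, mul_neg, zero_add, neg_mul,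
    cons_val, zero_mul, Matrix.smul_apply, Matrix.sub_apply, vecMulVec_apply, smul_eq_mul]
  ring

theorem mem_iff {rs : ℝ} {Q : Matrix (Fin 3) (Fin 3) ℝ} :
    Q ∈ Nman rs ↔ ∃ U : Matrix (Fin 3) (Fin 3) ℝ, Uᵀ * U = 1 ∧ Q = U * basePoint rs * Uᵀ := by
  constructor
  · rintro ⟨n, m, hn, hm, hnm, rfl⟩
    refine ⟨(of ![n, m, n ⨯₃ m])ᵀ, ?_, ?_⟩
    · rw [transpose_transpose]
      refine of_mul_transpose_eq_one_of_orthonormal hn hm ?_ hnm (dot_self_cross n m)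
        (dot_cross_self n m)
      rw [cross_dot_cross, hn, hm, hnm]
      norm_num
    · rw [mul_basePoint_mul_transpose, transpose_transpose]
      rfl
  · rintro ⟨U, hU, rfl⟩
    have hcol (i j : Fin 3) : Uᵀ i ⬝ᵥ Uᵀ j = (1 : Matrix (Fin 3) (Fin 3) ℝ) i j := congrFun₂ hU i j
    exact ⟨Uᵀ 0, Uᵀ 1, by simpa using hcol 0 0, by simpa using hcol 1 1, by simpa using hcol 0 1,
      mul_basePoint_mul_transpose rs U⟩

variable {rs : ℝ} {Q : Matrix (Fin 3) (Fin 3) ℝ}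

theorem conj_mem {U : Matrix (Fin 3) (Fin 3) ℝ} (hU : Uᵀ * U = 1) (hQ : Q ∈ Nman rs) :
    U * Q * Uᵀ ∈ Nman rs := by
  obtain ⟨V, hV, rfl⟩ := mem_iff.mp hQ
  refine mem_iff.mpr ⟨U * V, ?_, ?_⟩
  · rw [transpose_mul, Matrix.mul_assoc, ← Matrix.mul_assoc Uᵀ, hU, Matrix.one_mul, hV]
  · simp only [transpose_mul, Matrix.mul_assoc]

theorem transpose_eq (hQ : Q ∈ Nman rs) : Qᵀ = Q := by
  obtain ⟨U, -, rfl⟩ := mem_iff.mp hQ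
  rw [transpose_conj, basePoint, diagonal_transpose]

theorem trace_eq_zero (hQ : Q ∈ Nman rs) : Q.trace = 0 := by
  obtain ⟨U, hU, rfl⟩ := mem_iff.mp hQ
  simp [trace_conj_of_transpose_mul_eq_one hU, basePoint, Fin.sum_univ_three]

theorem trace_mul_self (hQ : Q ∈ Nman rs) : (Q * Q).trace = 2 * rs ^ 2 := by
  obtain ⟨U, hU, rfl⟩ := mem_iff.mp hQ
  simp only [basePoint, conj_mul_conj hU, diagonal_mul_diagonal,
    trace_conj_of_transpose_mul_eq_one hU, trace_diagonal, Fin.sum_univ_three, Fin.isValue,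
    cons_val_zero, cons_val_one, mul_neg, neg_mul, neg_neg, cons_val, mul_zero, add_zero]
  ring

theorem trace_mul_mul_self (hQ : Q ∈ Nman rs) : (Q * (Q * Q)).trace = 0 := by
  obtain ⟨U, hU, rfl⟩ := mem_iff.mp hQ
  simp [conj_mul_conj hU, trace_conj_of_transpose_mul_eq_one hU, basePoint, Fin.sum_univ_three]

theorem exists_skew_commutator_eq_basePoint (hrs : rs ≠ 0) {P : Matrix (Fin 3) (Fin 3) ℝ}
    (hP : P ∈ tangentSpaceAt (basePoint rs)) :
    ∃ A : Matrix (Fin 3) (Fin 3) ℝ, Aᵀ = -A ∧ A * basePoint rs - basePoint rs * A = P := by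
  obtain ⟨hPs, hPtr, hPD, hPDD⟩ := hP
  have h10 : P 1 0 = P 0 1 := congrFun₂ hPs 0 1
  have h20 : P 2 0 = P 0 2 := congrFun₂ hPs 0 2
  have h21 : P 2 1 = P 1 2 := congrFun₂ hPs 1 2
  simp only [trace_fin_three, Fin.isValue, basePoint, mul_apply, Fin.sum_univ_three,
    diagonal_apply_eq, cons_val_zero, ne_eq, one_ne_zero, not_false_eq_true, diagonal_apply_ne,
    mul_zero, add_zero, Fin.reduceEq, zero_ne_one, cons_val_one, mul_neg, zero_add, cons_val,
    diagonal_mul_diagonal, neg_mul, neg_neg] at hPtr hPD hPDD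
  have h00 : P 0 0 = P 1 1 := by
    have : (P 0 0 - P 1 1) * rs = 0 := by linarith
    linarith [(mul_eq_zero.mp this).resolve_right hrs]
  have h11 : P 1 1 = 0 := by
    have : (2 * P 1 1) * (rs * rs) = 0 := by rw [← hPDD, h00]; ring
    linarith [(mul_eq_zero.mp this).resolve_right (mul_ne_zero hrs hrs)]
  -- `A i j = P i j / (d j - d i)`, where `d = (rs, -rs, 0)` is the diagonal of `basePoint rs`
  refine ⟨!![0, -P 0 1 / (2 * rs), -P 0 2 / rs; P 0 1 / (2 * rs), 0, P 1 2 / rs;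
    P 0 2 / rs, -P 1 2 / rs, 0], ?_, ?_⟩
  · ext i j
    fin_cases i <;> fin_cases j <;> simp <;> ring
  · ext i j
    fin_cases i <;> fin_cases j <;> simp [basePoint, vecMul_diagonal, diagonal_mul] <;>
      first | linarith | field_simp <;> linarith

theorem exists_eq_of_mem_normalSpaceAt_basePoint (hrs : rs ≠ 0) {P : Matrix (Fin 3) (Fin 3) ℝ}
    (hP : P ∈ normalSpaceAt (basePoint rs)) :
    ∃ a b : ℝ, a • basePoint rs + b • (basePoint rs * basePoint rs - (2 * rs ^ 2 / 3) • 1) = P := by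
  obtain ⟨hPs, hPtr, horth⟩ := hP
  have hoff (i j : Fin 3) (hij : i ≠ j) : P i j = 0 := by
    have h := horth _ (single_add_single_mem_tangentSpaceAt_diagonal ![rs, -rs, 0] hij)
    rw [hPs, mul_add, trace_add, trace_mul_single, trace_mul_single] at h
    have hsym : P j i = P i j := congrFun₂ hPs i j
    simp only [MulOpposite.op_one, one_smul] at h
    linarith
  rw [trace_fin_three] at hPtr
  refine ⟨(P 0 0 - P 1 1) / (2 * rs), 3 * (P 0 0 + P 1 1) / (2 * rs ^ 2), ?_⟩
  ext i j
  fin_cases i <;> fin_cases j <;> simp [basePoint, hoff] <;> field_simp <;> linarith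

theorem exists_skew_commutator_eq (hrs : rs ≠ 0) (hQ : Q ∈ Nman rs)
    {P : Matrix (Fin 3) (Fin 3) ℝ} (hP : P ∈ tangentSpaceAt Q) :
    ∃ A : Matrix (Fin 3) (Fin 3) ℝ, Aᵀ = -A ∧ A * Q - Q * A = P := by
  obtain ⟨U, hU, rfl⟩ := mem_iff.mp hQ
  obtain ⟨P, rfl⟩ := exists_eq_conj hU P
  obtain ⟨A, hA, hAP⟩ :=
    exists_skew_commutator_eq_basePoint hrs ((conj_mem_tangentSpaceAt_iff hU).mp hP)
  refine ⟨U * A * Uᵀ, by rw [transpose_conj, hA, Matrix.mul_neg, Matrix.neg_mul], ?_⟩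
  rw [conj_mul_conj hU, conj_mul_conj hU, ← Matrix.sub_mul, ← Matrix.mul_sub, hAP]

theorem exists_eq_of_mem_normalSpaceAt (hrs : rs ≠ 0) (hQ : Q ∈ Nman rs)
    {P : Matrix (Fin 3) (Fin 3) ℝ} (hP : P ∈ normalSpaceAt Q) :
    ∃ a b : ℝ, a • Q + b • (Q * Q - (2 * rs ^ 2 / 3) • 1) = P := by
  obtain ⟨U, hU, rfl⟩ := mem_iff.mp hQ
  obtain ⟨P, rfl⟩ := exists_eq_conj hU P
  obtain ⟨hPs, hPtr, horth⟩ := hP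
  have hP' : P ∈ normalSpaceAt (basePoint rs) := by
    refine ⟨?_, ?_, fun X hX => ?_⟩
    · rwa [transpose_conj, conj_inj hU] at hPs
    · rwa [trace_conj_of_transpose_mul_eq_one hU] at hPtr
    · have := horth _ ((conj_mem_tangentSpaceAt_iff hU).mpr hX)
      rwa [transpose_conj, conj_mul_conj hU, trace_conj_of_transpose_mul_eq_one hU] at this
  obtain ⟨a, b, rfl⟩ := exists_eq_of_mem_normalSpaceAt_basePoint hrs hP'
  refine ⟨a, b, ?_⟩
  rw [conj_mul_conj hU]
  simp only [Matrix.mul_add, Matrix.add_mul, Matrix.mul_sub, Matrix.sub_mul, Matrix.mul_smul,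
    Matrix.smul_mul, Matrix.mul_one, mul_eq_one_comm.mp hU]

theorem smul_add_smul_mem_normalSpaceAt (hQ : Q ∈ Nman rs) (a b : ℝ) :
    a • Q + b • (Q * Q - (2 * rs ^ 2 / 3) • 1) ∈ normalSpaceAt Q := by
  have hQs := transpose_eq hQ
  refine ⟨?_, ?_, fun X ⟨_, hXtr, hXQ, hXQQ⟩ => ?_⟩
  · simp [transpose_mul, hQs]
  · simp [trace_eq_zero hQ, trace_mul_self hQ]
  · rw [trace_mul_comm] at hXQ hXQQ
    simp [transpose_mul, hQs, Matrix.add_mul, Matrix.sub_mul, hXtr, hXQ, hXQQ]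

section Differentiation

attribute [local instance] Matrix.frobeniusNormedRing Matrix.frobeniusNormedAlgebra

theorem tangentConeAt_subset (hQ : Q ∈ Nman rs) :
    tangentConeAt ℝ (Nman rs) Q ⊆ tangentSpaceAt Q := by
  intro P hP
  have hconst {F : Type} [NormedAddCommGroup F] [NormedSpace ℝ F]
      {f : Matrix (Fin 3) (Fin 3) ℝ → F} {f'} (hf : HasFDerivAt f f' Q)
      (hc : ∀ R ∈ Nman rs, f R = f Q) : f' P = 0 :=
    hf.hasFDerivWithinAt.apply_eq_zero_of_mem_tangentConeAt hc hP
  have htr (x : Matrix (Fin 3) (Fin 3) ℝ) :=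
    (traceLinearMap (Fin 3) ℝ ℝ).toContinuousLinearMap.hasFDerivAt (x := x)
  have hsq := (hasFDerivAt_id (𝕜 := ℝ) Q).mul' (hasFDerivAt_id Q)
  have hcube := (hasFDerivAt_id (𝕜 := ℝ) Q).mul' hsq
  refine ⟨?_, ?_, ?_, ?_⟩
  · have := hconst ((transposeLinearEquiv (Fin 3) (Fin 3) ℝ ℝ).toLinearMap.toContinuousLinearMap -
      ContinuousLinearMap.id ℝ _).hasFDerivAt
        (fun R hR => by simp [transpose_eq hR, transpose_eq hQ])
    exact sub_eq_zero.mp this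
  · simpa using hconst (htr Q) (fun R hR => by simp [trace_eq_zero hR, trace_eq_zero hQ])
  · have h : (Q * P + P * Q).trace = 0 :=
      hconst ((htr _).comp Q hsq) (fun R hR => by simp [trace_mul_self hR, trace_mul_self hQ])
    rw [trace_add, trace_mul_comm Q] at h
    linarith
  · have h : (Q * (Q * P + P * Q) + P * (Q * Q)).trace = 0 :=
      hconst ((htr _).comp Q hcube)
        (fun R hR => by simp [trace_mul_mul_self hR, trace_mul_mul_self hQ])
    rw [Matrix.mul_add, ← Matrix.mul_assoc, ← Matrix.mul_assoc, trace_add, trace_add,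
      trace_mul_cycle Q P Q, trace_mul_comm (Q * Q) P] at h
    linarith

theorem commutator_mem_tangentConeAt (hQ : Q ∈ Nman rs) {A : Matrix (Fin 3) (Fin 3) ℝ}
    (hA : Aᵀ = -A) : A * Q - Q * A ∈ tangentConeAt ℝ (Nman rs) Q := by
  have hexp (B : Matrix (Fin 3) (Fin 3) ℝ) : HasDerivAt (fun t : ℝ => exp (t • B)) B 0 := by
    have := hasDerivAt_exp_smul_const (𝕂 := ℝ) B 0
    rwa [zero_smul, exp_zero, one_mul] at this
  have hγ : HasDerivAt (fun t : ℝ => exp (t • A) * Q * (exp (t • A))ᵀ) (A * Q - Q * A) 0 := by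
    have hT (t : ℝ) : (exp (t • A))ᵀ = exp (t • -A) := by
      rw [← exp_transpose, transpose_smul, hA]
    have h := ((hexp A).mul_const Q).mul (hexp (-A))
    rw [zero_smul, zero_smul, exp_zero, Matrix.mul_one, Matrix.one_mul, Matrix.mul_neg,
      ← sub_eq_add_neg] at h
    simp only [hT]
    exact h
  have hmem (t : ℝ) : exp (t • A) * Q * (exp (t • A))ᵀ ∈ Nman rs :=
    conj_mem (transpose_exp_mul_exp (by rw [transpose_smul, hA, smul_neg])) hQ
  have := mem_tangentConeAt_of_hasDerivAt hmem hγ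
  rwa [zero_smul, exp_zero, Matrix.one_mul, transpose_one, Matrix.mul_one] at this

end Differentiation

end Nman

/-- For `Q ∈ N`, the tangent space `T_Q N` (realized as the tangent cone of `N`
at `Q`) equals `{P ∈ S₀ : tr(PQ) = 0, tr(PQ²) = 0}`, and the normal space, i.e. the orthogonal
complement of `T_Q N` inside the traceless symmetric matrices `S₀`, is spanned by
`Q/(√2 r*)` and `(√6/(2r*²))(Q² − (2r*²/3) I)`. -/
theorem stmt_3 (rs : ℝ) (hrs : 0 < rs) (Q : Matrix (Fin 3) (Fin 3) ℝ) (hQ : Q ∈ Nman rs) :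
    tangentConeAt ℝ (Nman rs) Q =
      {P : Matrix (Fin 3) (Fin 3) ℝ | Pᵀ = P ∧ P.trace = 0 ∧
        (P * Q).trace = 0 ∧ (P * (Q * Q)).trace = 0} ∧
    {P : Matrix (Fin 3) (Fin 3) ℝ | Pᵀ = P ∧ P.trace = 0 ∧
        ∀ X ∈ tangentConeAt ℝ (Nman rs) Q, (Pᵀ * X).trace = 0} =
      (Submodule.span ℝ
        ({(Real.sqrt 2 * rs)⁻¹ • Q,
          (Real.sqrt 6 / (2 * rs ^ 2)) •
            (Q * Q - (2 * rs ^ 2 / 3) • (1 : Matrix (Fin 3) (Fin 3) ℝ))} :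
          Set (Matrix (Fin 3) (Fin 3) ℝ)) : Set (Matrix (Fin 3) (Fin 3) ℝ)) := by
  have hT : tangentConeAt ℝ (Nman rs) Q = Nman.tangentSpaceAt Q := by
    refine (Nman.tangentConeAt_subset hQ).antisymm fun P hP => ?_
    obtain ⟨A, hA, rfl⟩ := Nman.exists_skew_commutator_eq hrs.ne' hQ hP
    exact Nman.commutator_mem_tangentConeAt hQ hA
  refine ⟨hT, ?_⟩
  rw [hT]
  ext P
  change P ∈ Nman.normalSpaceAt Q ↔ _
  have h2 : Real.sqrt 2 ≠ 0 := by positivity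
  have h6 : Real.sqrt 6 ≠ 0 := by positivity
  rw [SetLike.mem_coe, Submodule.mem_span_pair]
  simp only [smul_smul]
  constructor
  · intro hP
    obtain ⟨a, b, rfl⟩ := Nman.exists_eq_of_mem_normalSpaceAt hrs.ne' hQ hP
    refine ⟨a * (Real.sqrt 2 * rs), b * (2 * rs ^ 2 / Real.sqrt 6), ?_⟩
    field_simp
  · rintro ⟨a, b, rfl⟩
    exact Nman.smul_add_smul_mem_normalSpaceAt hQ _ _
end

section
/- Every traceless symmetric real 3×3 matrix Q satisfies √6·|tr(Q³)| ≤ |Q|³, where |Q|² = tr(Q²). -/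
/-!
Diagonalise `Q`: with eigenvalues `a, b, c` (so `a + b + c = 0`), `tr Q² = a² + b² + c²` and
`tr Q³ = a³ + b³ + c³`. For `a + b + c = 0` the difference `(a² + b² + c²)³ - 6 (a³ + b³ + c³)²` is
twice the discriminant `((a - b)(b - c)(c - a))²` of the cubic with roots `a, b, c`, hence
nonnegative; taking square roots gives the claim.
-/

open Matrix

theorem Matrix.IsHermitian.trace_pow_eq_sum_eigenvalues_pow {𝕜 n : Type*} [RCLike 𝕜] [Fintype n]
    [DecidableEq n] {A : Matrix n n 𝕜} (hA : A.IsHermitian) (k : ℕ) :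
    (A ^ k).trace = ∑ i, (hA.eigenvalues i : 𝕜) ^ k := by
  conv_lhs => rw [hA.spectral_theorem, ← map_pow, Unitary.conjStarAlgAut_apply, trace_mul_cycle,
    Unitary.coe_star_mul_self, one_mul, diagonal_pow, trace_diagonal]
  rfl

theorem six_mul_sq_sum_cube_le_cube_sum_sq {R : Type*} [CommRing R] [LinearOrder R]
    [IsStrictOrderedRing R] {a b c : R} (h : a + b + c = 0) :
    6 * (a ^ 3 + b ^ 3 + c ^ 3) ^ 2 ≤ (a ^ 2 + b ^ 2 + c ^ 2) ^ 3 := by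
  have discr : (a ^ 2 + b ^ 2 + c ^ 2) ^ 3 - 6 * (a ^ 3 + b ^ 3 + c ^ 3) ^ 2 =
      2 * ((a - b) * (b - c) * (c - a)) ^ 2 := by
    obtain rfl : c = -(a + b) := by linear_combination h
    ring
  nlinarith [sq_nonneg ((a - b) * (b - c) * (c - a))]

theorem sqrt_six_mul_abs_sum_cube_le {a b c : ℝ} (h : a + b + c = 0) :
    √6 * |a ^ 3 + b ^ 3 + c ^ 3| ≤ √(a ^ 2 + b ^ 2 + c ^ 2) ^ 3 := by
  rw [← pow_le_pow_iff_left₀ (by positivity) (by positivity) two_ne_zero]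
  calc (√6 * |a ^ 3 + b ^ 3 + c ^ 3|) ^ 2 = 6 * (a ^ 3 + b ^ 3 + c ^ 3) ^ 2 := by
        rw [mul_pow, Real.sq_sqrt (by norm_num), sq_abs]
    _ ≤ (a ^ 2 + b ^ 2 + c ^ 2) ^ 3 := six_mul_sq_sum_cube_le_cube_sum_sq h
    _ = (√(a ^ 2 + b ^ 2 + c ^ 2) ^ 3) ^ 2 := by
        rw [pow_right_comm, Real.sq_sqrt (by positivity)]

/-- Every traceless symmetric real 3×3 matrix `Q` satisfies
`√6 |tr Q³| ≤ |Q|³`, where `|Q|` is the Frobenius norm, `|Q|² = tr Q²`. -/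
theorem stmt_4 (Q : Matrix (Fin 3) (Fin 3) ℝ) (hsym : Qᵀ = Q) (htr : Q.trace = 0) :
    Real.sqrt 6 * |(Q * Q * Q).trace| ≤ Real.sqrt ((Q * Q).trace) ^ 3 := by
  have hQ : Q.IsHermitian := isHermitian_iff_isSymm.mpr hsym
  have hsum := htr ▸ hQ.trace_eq_sum_eigenvalues
  rw [← pow_three', ← pow_two, hQ.trace_pow_eq_sum_eigenvalues_pow,
    hQ.trace_pow_eq_sum_eigenvalues_pow]
  simp only [Fin.sum_univ_three, RCLike.ofReal_real_eq_id, id] at hsum ⊢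
  exact sqrt_six_mul_abs_sum_cube_le hsum.symm
end

section
/- Let f₀(μ,ν) = a₁ − (a₂/2)μ + (a₄/4)μ² + (a₆/6)μ³ + (a₆'/6)ν² with a₂,a₄,a₆,a₆' > 0, restricted to μ ≥ 0. Then f₀ attains its minimum over {(μ,ν) : μ ≥ 0, ν ∈ ℝ} exactly at μ = (−a₄ + √(a₄² + 4a₂a₆))/(2a₆), ν = 0. -/
/-- The function `f₀(μ,ν) = a₁ − (a₂/2)μ + (a₄/4)μ² + (a₆/6)μ³ + (a₆'/6)ν²`
with `a₂,a₄,a₆,a₆' > 0`, restricted to `μ ≥ 0`, attains its minimum over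
`{(μ,ν) : μ ≥ 0}` exactly at `μ = (−a₄ + √(a₄² + 4a₂a₆))/(2a₆)`, `ν = 0`. -/
theorem stmt_6 (a1 a2 a4 a6 a6' : ℝ) (ha2 : 0 < a2) (ha4 : 0 < a4) (ha6 : 0 < a6)
    (ha6' : 0 < a6') (f0 : ℝ → ℝ → ℝ)
    (hf0 : ∀ μ ν, f0 μ ν =
      a1 - a2 / 2 * μ + a4 / 4 * μ ^ 2 + a6 / 6 * μ ^ 3 + a6' / 6 * ν ^ 2)
    (μ0 : ℝ) (hμ0 : μ0 = (-a4 + Real.sqrt (a4 ^ 2 + 4 * a2 * a6)) / (2 * a6)) :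
    (∀ μ ν : ℝ, 0 ≤ μ → f0 μ0 0 ≤ f0 μ ν) ∧
    (∀ μ ν : ℝ, 0 ≤ μ → f0 μ ν = f0 μ0 0 → μ = μ0 ∧ ν = 0) := by
  set s := Real.sqrt (a4 ^ 2 + 4 * a2 * a6) with hs_def
  have hs : s ^ 2 = a4 ^ 2 + 4 * a2 * a6 := Real.sq_sqrt (by positivity)
  have hsnn : 0 ≤ s := Real.sqrt_nonneg _
  have hsgt : a4 < s := by nlinarith [hs]
  have hμ0pos : 0 < μ0 := by
    rw [hμ0]
    apply div_pos (by linarith) (by linarith)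
  have hkey : a6 * μ0 ^ 2 + a4 * μ0 - a2 = 0 := by
    rw [hμ0]
    field_simp
    nlinarith [hs]
  have hid : ∀ μ ν : ℝ, f0 μ ν - f0 μ0 0 =
      (μ - μ0) ^ 2 * (a6 / 6 * (μ + 2 * μ0) + a4 / 4) + a6' / 6 * ν ^ 2 := by
    intro μ ν
    rw [hf0, hf0]
    linear_combination ((μ - μ0) / 2) * hkey
  constructor
  · intro μ ν hμ
    have h := hid μ ν
    have h1 : 0 ≤ (μ - μ0) ^ 2 * (a6 / 6 * (μ + 2 * μ0) + a4 / 4) := by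
      apply mul_nonneg (sq_nonneg _)
      nlinarith
    nlinarith [sq_nonneg ν]
  · intro μ ν hμ heq
    have h := hid μ ν
    rw [heq] at h
    have hfac : 0 < a6 / 6 * (μ + 2 * μ0) + a4 / 4 := by nlinarith
    have h1 : 0 ≤ (μ - μ0) ^ 2 * (a6 / 6 * (μ + 2 * μ0) + a4 / 4) :=
      mul_nonneg (sq_nonneg _) hfac.le
    have h2 : 0 ≤ a6' / 6 * ν ^ 2 := by positivity
    have hz1 : (μ - μ0) ^ 2 * (a6 / 6 * (μ + 2 * μ0) + a4 / 4) = 0 := by linarith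
    have hz2 : a6' / 6 * ν ^ 2 = 0 := by linarith
    constructor
    · have : (μ - μ0) ^ 2 = 0 := by
        rcases mul_eq_zero.mp hz1 with h | h
        · exact h
        · exact absurd h hfac.ne'
      nlinarith [this]
    · have : ν ^ 2 = 0 := by
        rcases mul_eq_zero.mp hz2 with h | h
        · exact absurd h (by positivity : (0:ℝ) < a6'/6).ne'
        · exact h
      exact pow_eq_zero_iff (by norm_num) |>.mp this
end

section
/- For 0 < τ < 1/2 define β_τ(r) = (1/(24τ⁵))((2r−1)/2)⁶ − (5/(8τ))((2r−1)/2)² + (6−5τ)/12. Then for all r ∈ [(1−2τ)/2, (1+2τ)/2] one has (1−2τ)/2 ≤ β_τ(r) ≤ (6−5τ)/12 and |β_τ'(r)| ≤ 1. -/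
/-!
In the variable `s = r - 1/2` the claims concern the even polynomial
`q(s) = s⁶/(24τ⁵) − 5s²/(8τ) + (6−5τ)/12` on `|s| ≤ τ`. Writing `u = s²` and `a = τ²`,
`24τ⁵ (q − (1−2τ)/2) = (u − a)(u² + au − 14a²)` is a product of two non-positive factors and
`24τ⁵ (q − (6−5τ)/12) = u(u² − 15a²)` is non-positive. The derivative is
`(s⁵ − 5τ⁴s)/(4τ⁵)`, and `s⁵ − 5τ⁴s + 4τ⁵ = (τ − s)²(s³ + 2τs² + 3τ²s + 4τ³) ≥ 0`; by oddness this
gives `|q'| ≤ 1`.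
-/

noncomputable def betaCentered (τ s : ℝ) : ℝ :=
  1 / (24 * τ ^ 5) * s ^ 6 - 5 / (8 * τ) * s ^ 2 + (6 - 5 * τ) / 12

section Polynomial

variable {a u s t : ℝ}

lemma cubic_sub_nonneg_of_le (hu : 0 ≤ u) (hua : u ≤ a) :
    0 ≤ u ^ 3 - 15 * a ^ 2 * u + 14 * a ^ 3 := by
  have hfactor : u ^ 3 - 15 * a ^ 2 * u + 14 * a ^ 3 = (a - u) * (14 * a ^ 2 - a * u - u ^ 2) := by
    ring
  rw [hfactor]
  exact mul_nonneg (by linarith) (by nlinarith)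

lemma cubic_sub_nonpos_of_le (hu : 0 ≤ u) (hua : u ≤ a) : u ^ 3 - 15 * a ^ 2 * u ≤ 0 := by
  have hfactor : u ^ 3 - 15 * a ^ 2 * u = u * (u ^ 2 - 15 * a ^ 2) := by ring
  rw [hfactor]
  exact mul_nonpos_of_nonneg_of_nonpos hu (by nlinarith)

lemma quintic_sub_add_nonneg (hs : |s| ≤ t) : 0 ≤ s ^ 5 - 5 * t ^ 4 * s + 4 * t ^ 5 := by
  have hts : -t ≤ s := (abs_le.mp hs).1
  have hcubic : 0 ≤ s ^ 3 + 2 * t * s ^ 2 + 3 * t ^ 2 * s + 4 * t ^ 3 := by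
    have hcubic_eq : s ^ 3 + 2 * t * s ^ 2 + 3 * t ^ 2 * s + 4 * t ^ 3
        = (t + s) * ((s + t / 2) ^ 2 + 7 / 4 * t ^ 2) + 2 * t ^ 3 := by ring
    have ht : 0 ≤ t := (abs_nonneg s).trans hs
    have := mul_nonneg (by linarith : 0 ≤ t + s)
      (by positivity : 0 ≤ (s + t / 2) ^ 2 + 7 / 4 * t ^ 2)
    linarith [pow_nonneg ht 3]
  have hfactor : s ^ 5 - 5 * t ^ 4 * s + 4 * t ^ 5
      = (t - s) ^ 2 * (s ^ 3 + 2 * t * s ^ 2 + 3 * t ^ 2 * s + 4 * t ^ 3) := by ring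
  rw [hfactor]
  positivity

lemma abs_quintic_sub_le (hs : |s| ≤ t) : |s ^ 5 - 5 * t ^ 4 * s| ≤ 4 * t ^ 5 := by
  have hneg := quintic_sub_add_nonneg (s := -s) (t := t) (by rwa [abs_neg])
  rw [abs_le]
  constructor <;> linarith [quintic_sub_add_nonneg hs]

end Polynomial

section BetaCentered

variable {τ s : ℝ}

lemma betaCentered_sub_lower (hτ : τ ≠ 0) :
    betaCentered τ s - (1 - 2 * τ) / 2
      = ((s ^ 2) ^ 3 - 15 * (τ ^ 2) ^ 2 * s ^ 2 + 14 * (τ ^ 2) ^ 3) / (24 * τ ^ 5) := by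
  unfold betaCentered
  field_simp
  ring

lemma betaCentered_sub_upper (hτ : τ ≠ 0) :
    betaCentered τ s - (6 - 5 * τ) / 12
      = ((s ^ 2) ^ 3 - 15 * (τ ^ 2) ^ 2 * s ^ 2) / (24 * τ ^ 5) := by
  unfold betaCentered
  field_simp
  ring

lemma le_betaCentered (hτ : 0 < τ) (hs : |s| ≤ τ) : (1 - 2 * τ) / 2 ≤ betaCentered τ s := by
  have hsq : s ^ 2 ≤ τ ^ 2 := sq_le_sq' (abs_le.mp hs).1 (abs_le.mp hs).2
  have := div_nonneg (cubic_sub_nonneg_of_le (sq_nonneg s) hsq) (by positivity : 0 ≤ 24 * τ ^ 5)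
  linarith [betaCentered_sub_lower (s := s) hτ.ne']

lemma betaCentered_le (hτ : 0 < τ) (hs : |s| ≤ τ) : betaCentered τ s ≤ (6 - 5 * τ) / 12 := by
  have hsq : s ^ 2 ≤ τ ^ 2 := sq_le_sq' (abs_le.mp hs).1 (abs_le.mp hs).2
  have := div_nonpos_of_nonpos_of_nonneg (cubic_sub_nonpos_of_le (sq_nonneg s) hsq)
    (by positivity : 0 ≤ 24 * τ ^ 5)
  linarith [betaCentered_sub_upper (s := s) hτ.ne']

lemma hasDerivAt_betaCentered (hτ : τ ≠ 0) :
    HasDerivAt (betaCentered τ) ((s ^ 5 - 5 * τ ^ 4 * s) / (4 * τ ^ 5)) s := by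
  have h : HasDerivAt (betaCentered τ)
      (1 / (24 * τ ^ 5) * (6 * s ^ 5) - 5 / (8 * τ) * (2 * s ^ 1)) s :=
    (((hasDerivAt_pow 6 s).const_mul _).sub ((hasDerivAt_pow 2 s).const_mul _)).add_const _
  convert h using 1
  field_simp
  ring

lemma abs_deriv_betaCentered_le (hτ : 0 < τ) (hs : |s| ≤ τ) :
    |deriv (betaCentered τ) s| ≤ 1 := by
  rw [(hasDerivAt_betaCentered hτ.ne').deriv, abs_div,
    abs_of_pos (by positivity : (0 : ℝ) < 4 * τ ^ 5), div_le_one (by positivity)]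
  exact abs_quintic_sub_le hs

end BetaCentered

theorem stmt_7_general (τ : ℝ) (hτ0 : 0 < τ) (β : ℝ → ℝ)
    (hβ : ∀ r : ℝ, β r = 1 / (24 * τ ^ 5) * ((2 * r - 1) / 2) ^ 6
      - 5 / (8 * τ) * ((2 * r - 1) / 2) ^ 2 + (6 - 5 * τ) / 12) :
    ∀ r ∈ Set.Icc ((1 - 2 * τ) / 2) ((1 + 2 * τ) / 2),
      (1 - 2 * τ) / 2 ≤ β r ∧ β r ≤ (6 - 5 * τ) / 12 ∧ |deriv β r| ≤ 1 := by
  rintro r ⟨hr₁, hr₂⟩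
  have hβ_eq : β = betaCentered τ ∘ fun r ↦ (2 * r - 1) / 2 := funext hβ
  have hs : |(2 * r - 1) / 2| ≤ τ := abs_le.mpr ⟨by linarith, by linarith⟩
  have hshift : HasDerivAt (fun r : ℝ ↦ (2 * r - 1) / 2) 1 r := by
    simpa using (((hasDerivAt_id r).const_mul 2).sub_const 1).div_const 2
  have hderiv : deriv β r = deriv (betaCentered τ) ((2 * r - 1) / 2) := by
    rw [hβ_eq, ((hasDerivAt_betaCentered hτ0.ne').comp r hshift).deriv,
      (hasDerivAt_betaCentered hτ0.ne').deriv, mul_one]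
  rw [hderiv, hβ_eq]
  exact ⟨le_betaCentered hτ0 hs, betaCentered_le hτ0 hs, abs_deriv_betaCentered_le hτ0 hs⟩

/-- For `0 < τ < 1/2`, the polynomial
`β_τ(r) = (1/(24τ⁵))((2r−1)/2)⁶ − (5/(8τ))((2r−1)/2)² + (6−5τ)/12` satisfies, for all
`r ∈ [(1−2τ)/2, (1+2τ)/2]`, the bounds `(1−2τ)/2 ≤ β_τ(r) ≤ (6−5τ)/12` and `|β_τ'(r)| ≤ 1`. -/
theorem stmt_7 (τ : ℝ) (hτ0 : 0 < τ) (hτ : τ < 1 / 2) (β : ℝ → ℝ)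
    (hβ : ∀ r : ℝ, β r = 1 / (24 * τ ^ 5) * ((2 * r - 1) / 2) ^ 6
      - 5 / (8 * τ) * ((2 * r - 1) / 2) ^ 2 + (6 - 5 * τ) / 12) :
    ∀ r ∈ Set.Icc ((1 - 2 * τ) / 2) ((1 + 2 * τ) / 2),
      (1 - 2 * τ) / 2 ≤ β r ∧ β r ≤ (6 - 5 * τ) / 12 ∧ |deriv β r| ≤ 1 :=
  stmt_7_general τ hτ0 β hβ
end

section
/- Let Q* = r*·diag(1,−1,0) and let P = diag(x, y, −x−y) be any diagonal traceless matrix (an element of the normal space of N at Q*). Then the second derivative at t = 0 of t ↦ f_b(Q* + tP) equals 3a₆'r*⁴(x+y)² + 2r*²(a₄ + 4a₆r*²)(x−y)², and consequently there exist constants c₁, C₁ > 0 depending only on a₂,a₄,a₆,a₆' with c₁|P|² ≤ (d²/dt²)|_{t=0} f_b(Q*+tP) ≤ C₁|P|². -/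
set_option maxHeartbeats 1000000


open Matrix

/-- second derivative at 0 of an explicit degree-6 polynomial -/
lemma poly_d2 (A B C D E Fc G : ℝ) :
    iteratedDeriv 2 (fun t : ℝ => A + B*t + C*t^2 + D*t^3 + E*t^4 + Fc*t^5 + G*t^6) 0
      = 2 * C := by
  have key : ∀ t : ℝ, HasDerivAt
      (fun t : ℝ => A + B*t + C*t^2 + D*t^3 + E*t^4 + Fc*t^5 + G*t^6)
      (B + 2*C*t + 3*D*t^2 + 4*E*t^3 + 5*Fc*t^4 + 6*G*t^5) t := by
    intro t
    have h : HasDerivAt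
        (fun t : ℝ => A + B*t + C*t^2 + D*t^3 + E*t^4 + Fc*t^5 + G*t^6)
        (0 + B*1 + C*((2:ℕ)*t^(2-1)) + D*((3:ℕ)*t^(3-1)) + E*((4:ℕ)*t^(4-1))
          + Fc*((5:ℕ)*t^(5-1)) + G*((6:ℕ)*t^(6-1))) t := by
      exact ((((((hasDerivAt_const t A).add ((hasDerivAt_id t).const_mul B)).add
        ((hasDerivAt_pow 2 t).const_mul C)).add ((hasDerivAt_pow 3 t).const_mul D)).add
        ((hasDerivAt_pow 4 t).const_mul E)).add ((hasDerivAt_pow 5 t).const_mul Fc)).add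
        ((hasDerivAt_pow 6 t).const_mul G)
    convert h using 1
    push_cast
    ring
  have hd : deriv (fun t : ℝ => A + B*t + C*t^2 + D*t^3 + E*t^4 + Fc*t^5 + G*t^6)
      = fun t : ℝ => B + 2*C*t + 3*D*t^2 + 4*E*t^3 + 5*Fc*t^4 + 6*G*t^5 := by
    funext t; exact (key t).deriv
  have key2 : HasDerivAt (fun t : ℝ => B + 2*C*t + 3*D*t^2 + 4*E*t^3 + 5*Fc*t^4 + 6*G*t^5)
      (2*C) 0 := by
    have h : HasDerivAt (fun t : ℝ => B + 2*C*t + 3*D*t^2 + 4*E*t^3 + 5*Fc*t^4 + 6*G*t^5)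
        (0 + 2*C*1 + 3*D*((2:ℕ)*(0:ℝ)^(2-1)) + 4*E*((3:ℕ)*(0:ℝ)^(3-1))
          + 5*Fc*((4:ℕ)*(0:ℝ)^(4-1)) + 6*G*((5:ℕ)*(0:ℝ)^(5-1))) 0 := by
      exact (((((hasDerivAt_const (0:ℝ) B).add ((hasDerivAt_id (0:ℝ)).const_mul (2*C))).add
        ((hasDerivAt_pow 2 (0:ℝ)).const_mul (3*D))).add
        ((hasDerivAt_pow 3 (0:ℝ)).const_mul (4*E))).add
        ((hasDerivAt_pow 4 (0:ℝ)).const_mul (5*Fc))).add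
        ((hasDerivAt_pow 5 (0:ℝ)).const_mul (6*G))
    convert h using 1
    norm_num
  rw [iteratedDeriv_succ, iteratedDeriv_one, hd]
  exact key2.deriv

/-- Let `Q* = r* diag(1,−1,0)` and `P = diag(x, y, −x−y)`. Then the second
derivative at `t = 0` of `t ↦ f_b(Q* + tP)` equals
`3a₆'r*⁴(x+y)² + 2r*²(a₄ + 4a₆r*²)(x−y)²`, and there are constants `c₁, C₁ > 0` depending only
on `a₂, a₄, a₆, a₆'` with `c₁|P|² ≤ (d²/dt²)|₀ f_b(Q*+tP) ≤ C₁|P|²`, where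
`|P|² = x² + y² + (x+y)²`. -/
theorem stmt_12 (a1 a2 a4 a6 a6' rs : ℝ)
    (ha2 : 0 < a2) (ha4 : 0 < a4) (ha6 : 0 < a6) (ha6' : 0 < a6')
    (hrs : 0 < rs) (hrseq : 4 * a6 * rs ^ 4 + 2 * a4 * rs ^ 2 - a2 = 0)
    (fb : Matrix (Fin 3) (Fin 3) ℝ → ℝ)
    (hfb : ∀ A : Matrix (Fin 3) (Fin 3) ℝ, fb A =
      a1 - a2 / 2 * (A * A).trace + a4 / 4 * ((A * A).trace) ^ 2
        + a6 / 6 * ((A * A).trace) ^ 3 + a6' / 6 * ((A * A * A).trace) ^ 2)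
    (Qs : Matrix (Fin 3) (Fin 3) ℝ) (hQs : Qs = rs • Matrix.diagonal ![1, -1, 0]) :
    (∀ x y : ℝ,
      iteratedDeriv 2 (fun t : ℝ => fb (Qs + t • Matrix.diagonal ![x, y, -x - y])) 0
        = 3 * a6' * rs ^ 4 * (x + y) ^ 2 + 2 * rs ^ 2 * (a4 + 4 * a6 * rs ^ 2) * (x - y) ^ 2) ∧
    ∃ c1 C1 : ℝ, 0 < c1 ∧ 0 < C1 ∧ ∀ x y : ℝ,
      c1 * (x ^ 2 + y ^ 2 + (x + y) ^ 2) ≤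
        iteratedDeriv 2 (fun t : ℝ => fb (Qs + t • Matrix.diagonal ![x, y, -x - y])) 0 ∧
      iteratedDeriv 2 (fun t : ℝ => fb (Qs + t • Matrix.diagonal ![x, y, -x - y])) 0 ≤
        C1 * (x ^ 2 + y ^ 2 + (x + y) ^ 2) := by
  have main : ∀ x y : ℝ,
      iteratedDeriv 2 (fun t : ℝ => fb (Qs + t • Matrix.diagonal ![x, y, -x - y])) 0
        = 3 * a6' * rs ^ 4 * (x + y) ^ 2 + 2 * rs ^ 2 * (a4 + 4 * a6 * rs ^ 2) * (x - y) ^ 2 := by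
    intro x y
    have hfun : (fun t : ℝ => fb (Qs + t • Matrix.diagonal ![x, y, -x - y])) =
        fun t : ℝ =>
          (a1 - a2/2*(2*rs^2) + a4/4*(4*rs^4) + a6/6*(8*rs^6))
          + (-(a2/2)*(2*x*rs - 2*y*rs) + a4/4*(8*x*rs^3 - 8*y*rs^3)
              + a6/6*(24*x*rs^5 - 24*y*rs^5))*t
          + (-(a2/2)*(2*x^2 + 2*x*y + 2*y^2)
              + a4/4*(12*x^2*rs^2 + 12*y^2*rs^2)
              + a6/6*(48*x^2*rs^4 - 24*x*y*rs^4 + 48*y^2*rs^4)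
              + a6'/6*(9*x^2*rs^4 + 18*x*y*rs^4 + 9*y^2*rs^4))*t^2
          + (a4/4*(8*x^3*rs - 8*y^3*rs)
              + a6/6*(56*x^3*rs^3 - 24*x^2*y*rs^3 + 24*x*y^2*rs^3 - 56*y^3*rs^3)
              + a6'/6*(18*x^3*rs^3 + 18*x^2*y*rs^3 - 18*x*y^2*rs^3 - 18*y^3*rs^3))*t^3
          + (a4/4*(4*x^4 + 8*x^3*y + 12*x^2*y^2 + 8*x*y^3 + 4*y^4)
              + a6/6*(48*x^4*rs^2 + 24*x^3*y*rs^2 + 72*x^2*y^2*rs^2 + 24*x*y^3*rs^2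
                  + 48*y^4*rs^2)
              + a6'/6*(9*x^4*rs^2 - 18*x^3*y*rs^2 - 54*x^2*y^2*rs^2 - 18*x*y^3*rs^2
                  + 9*y^4*rs^2))*t^4
          + (a6/6*(24*x^5*rs + 24*x^4*y*rs + 24*x^3*y^2*rs - 24*x^2*y^3*rs - 24*x*y^4*rs
                  - 24*y^5*rs)
              + a6'/6*(-18*x^4*y*rs - 18*x^3*y^2*rs + 18*x^2*y^3*rs + 18*x*y^4*rs))*t^5
          + (a6/6*(8*x^6 + 24*x^5*y + 48*x^4*y^2 + 56*x^3*y^3 + 48*x^2*y^4 + 24*x*y^5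
                  + 8*y^6)
              + a6'/6*(9*x^4*y^2 + 18*x^3*y^3 + 9*x^2*y^4))*t^6 := by
      funext t
      set M : Matrix (Fin 3) (Fin 3) ℝ :=
        rs • Matrix.diagonal ![1, -1, 0] + t • Matrix.diagonal ![x, y, -x - y] with hM
      have h2 : ((M * M).trace : ℝ)
          = (rs + t*x)^2 + (-rs + t*y)^2 + (t*(-x-y))^2 := by
        rw [hM]
        simp [Matrix.trace, Matrix.diag, Matrix.mul_apply, Fin.sum_univ_three, Matrix.diagonal]
        ring
      have h3 : ((M * M * M).trace : ℝ)
          = (rs + t*x)^3 + (-rs + t*y)^3 + (t*(-x-y))^3 := by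
        rw [hM]
        simp [Matrix.trace, Matrix.diag, Matrix.mul_apply, Fin.sum_univ_three, Matrix.diagonal]
        ring
      rw [hfb, hQs, ← hM, h2, h3]
      ring
    rw [hfun, poly_d2]
    linear_combination (2*(x^2 + x*y + y^2)) * hrseq
  refine ⟨main, min (2*(3*a6'*rs^4)/3) (2*(2*rs^2*(a4+4*a6*rs^2)))
    , max (2*(3*a6'*rs^4)/3) (2*(2*rs^2*(a4+4*a6*rs^2))), ?_, ?_, ?_⟩
  · positivity
  · apply lt_max_of_lt_left; positivity
  · intro x y
    rw [main x y]
    set α := 3*a6'*rs^4 with hα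
    set β := 2*rs^2*(a4+4*a6*rs^2) with hβ
    have hα0 : 0 < α := by positivity
    have hβ0 : 0 < β := by positivity
    have h1 : min (2*α/3) (2*β) ≤ 2*α/3 := min_le_left _ _
    have h2 : min (2*α/3) (2*β) ≤ 2*β := min_le_right _ _
    have h3 : 2*α/3 ≤ max (2*α/3) (2*β) := le_max_left _ _
    have h4 : 2*β ≤ max (2*α/3) (2*β) := le_max_right _ _
    have hu : (0:ℝ) ≤ (x+y)^2 := sq_nonneg _
    have hv : (0:ℝ) ≤ (x-y)^2 := sq_nonneg _
    constructor
    · nlinarith [mul_nonneg (sub_nonneg.2 h1) hu, mul_nonneg (sub_nonneg.2 h2) hv]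
    · nlinarith [mul_nonneg (sub_nonneg.2 h3) hu, mul_nonneg (sub_nonneg.2 h4) hv]
end
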